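/- arXiv:math/9810072 — 2 statements merged into one kernel-verified Lean document; each statement's English description precedes it below -/
import Mathlib

section
/- Every closed subspace of an α-subparacompact space is α-subparacompact. -/
open Set TopologicalSpace

universe u v

variable {X : Type u} {Y : Type v}

/-- A set is an α-set (α-open) w.r.t. the topology `T` if `A ⊆ Int (Cl (Int A))`. -/
def AlphaOpen (T : TopologicalSpace X) (A : Set X) : Prop :=
  letI := T
  A ⊆ interior (closure (interior A))

/-- The α-topology `𝒯^α`, whose open sets are exactly the α-sets of `T`. -/
def alphaTop (T : TopologicalSpace X) : TopologicalSpace X :=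
  letI := T
  { IsOpen := fun A => A ⊆ interior (closure (interior A))
    isOpen_univ := by simp
    isOpen_inter := by
      intro A B hA hB
      have hsub : interior (closure (interior A)) ∩ interior (closure (interior B)) ⊆
          closure (interior (A ∩ B)) := by
        intro x hx
        have h1 : interior (closure (interior B)) ∩ closure (interior A) ⊆
            closure (interior (closure (interior B)) ∩ interior A) :=
          isOpen_interior.inter_closure
        have h2 : interior (closure (interior B)) ∩ interior A ⊆
            closure (interior A ∩ interior B) := by
          intro y hy
          have h : interior A ∩ closure (interior B) ⊆ closure (interior A ∩ interior B) :=
            isOpen_interior.inter_closure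
          exact h ⟨hy.2, interior_subset hy.1⟩
        have h3 : closure (interior (closure (interior B)) ∩ interior A) ⊆
            closure (interior A ∩ interior B) := by
          calc closure (interior (closure (interior B)) ∩ interior A)
              ⊆ closure (closure (interior A ∩ interior B)) := closure_mono h2
            _ = closure (interior A ∩ interior B) := closure_closure
        have hx' : x ∈ closure (interior A ∩ interior B) :=
          h3 (h1 ⟨hx.2, interior_subset hx.1⟩)
        rwa [← interior_inter] at hx'
      intro x hx
      exact interior_maximal hsub (isOpen_interior.inter isOpen_interior) ⟨hA hx.1, hB hx.2⟩
    isOpen_sUnion := by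
      intro S hS x hx
      obtain ⟨t, htS, hxt⟩ := hx
      have h : interior (closure (interior t)) ⊆ interior (closure (interior (⋃₀ S))) :=
        interior_mono (closure_mono (interior_mono (subset_sUnion_of_mem htS)))
      exact h (hS t htS hxt) }

/-- `A` is semi-open w.r.t. `T` if `A ⊆ Cl (Int A)`. -/
def SemiOpen (T : TopologicalSpace X) (A : Set X) : Prop :=
  letI := T
  A ⊆ closure (interior A)

/-- `A` is semi-closed if its complement is semi-open. -/
def SemiClosed (T : TopologicalSpace X) (A : Set X) : Prop :=
  SemiOpen T Aᶜ

/-- The semi-closure of `A`: the intersection of all semi-closed sets containing `A`. -/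
def sCl (T : TopologicalSpace X) (A : Set X) : Set X :=
  ⋂₀ {C | SemiClosed T C ∧ A ⊆ C}

/-- `A` is sg-closed if `sCl A ⊆ U` whenever `A ⊆ U` with `U` semi-open. -/
def SgClosed (T : TopologicalSpace X) (A : Set X) : Prop :=
  ∀ U : Set X, SemiOpen T U → A ⊆ U → sCl T A ⊆ U

/-- `A` is sg-open if its complement is sg-closed. -/
def SgOpen (T : TopologicalSpace X) (A : Set X) : Prop :=
  SgClosed T Aᶜ

/-- `A` is regular closed w.r.t. `T` if `A = Cl (Int A)`. -/
def RegClosed (T : TopologicalSpace X) (A : Set X) : Prop :=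
  letI := T
  A = closure (interior A)

/-- A family `𝒱` refines a family `𝒰` if every member of `𝒱` is contained in a member of `𝒰`. -/
def Refines (𝒱 𝒰 : Set (Set X)) : Prop :=
  ∀ V ∈ 𝒱, ∃ U ∈ 𝒰, V ⊆ U

/-- A family of sets is locally finite if every point has a neighbourhood
meeting only finitely many members. -/
def LocFinite (T : TopologicalSpace X) (𝒱 : Set (Set X)) : Prop :=
  ∀ x : X, ∃ N ∈ @nhds X T x, {V ∈ 𝒱 | (V ∩ N).Nonempty}.Finite

/-- A family of sets is locally countable if every point has a neighbourhood
meeting only countably many members. -/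
def LocCountable (T : TopologicalSpace X) (𝒱 : Set (Set X)) : Prop :=
  ∀ x : X, ∃ N ∈ @nhds X T x, {V ∈ 𝒱 | (V ∩ N).Nonempty}.Countable

/-- A family of sets is discrete if every point has a neighbourhood
meeting at most one member. -/
def DiscreteFam (T : TopologicalSpace X) (𝒱 : Set (Set X)) : Prop :=
  ∀ x : X, ∃ N ∈ @nhds X T x, {V ∈ 𝒱 | (V ∩ N).Nonempty}.Subsingleton

/-- A family is σ-discrete if it is a countable union of discrete families. -/
def SigmaDiscrete (T : TopologicalSpace X) (𝒱 : Set (Set X)) : Prop :=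
  ∃ 𝒲 : ℕ → Set (Set X), 𝒱 = ⋃ n, 𝒲 n ∧ ∀ n, DiscreteFam T (𝒲 n)

/-- A family is closure-preserving if for every subfamily the closure of the
union is the union of the closures. -/
def ClosurePreserving (T : TopologicalSpace X) (𝒲 : Set (Set X)) : Prop :=
  letI := T
  ∀ 𝒲' ⊆ 𝒲, closure (⋃₀ 𝒲') = ⋃ W ∈ 𝒲', closure W

/-- A family is σ-closure-preserving if it is a countable union of
closure-preserving families. -/
def SigmaClosurePreserving (T : TopologicalSpace X) (𝒱 : Set (Set X)) : Prop :=
  ∃ 𝒲 : ℕ → Set (Set X), 𝒱 = ⋃ n, 𝒲 n ∧ ∀ n, ClosurePreserving T (𝒲 n)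

/-- Semi-compact: every semi-open cover has a finite subcover. -/
def SemiCompact (T : TopologicalSpace X) : Prop :=
  ∀ 𝒰 : Set (Set X), (∀ U ∈ 𝒰, SemiOpen T U) → ⋃₀ 𝒰 = univ →
    ∃ 𝒱 ⊆ 𝒰, 𝒱.Finite ∧ ⋃₀ 𝒱 = univ

/-- S-closed: for every semi-open cover there is a finite subfamily
whose closures cover. -/
def SClosed (T : TopologicalSpace X) : Prop :=
  letI := T
  ∀ 𝒰 : Set (Set X), (∀ U ∈ 𝒰, SemiOpen T U) → ⋃₀ 𝒰 = univ →
    ∃ 𝒱 ⊆ 𝒰, 𝒱.Finite ∧ (⋃ V ∈ 𝒱, closure V) = univ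

/-- s-closed: for every semi-open cover there is a finite subfamily
whose semi-closures cover. -/
def SmallSClosed (T : TopologicalSpace X) : Prop :=
  ∀ 𝒰 : Set (Set X), (∀ U ∈ 𝒰, SemiOpen T U) → ⋃₀ 𝒰 = univ →
    ∃ 𝒱 ⊆ 𝒰, 𝒱.Finite ∧ (⋃ V ∈ 𝒱, sCl T V) = univ

/-- rc-Lindelöf: every regular closed cover has a countable subcover. -/
def RcLindelof (T : TopologicalSpace X) : Prop :=
  ∀ 𝒰 : Set (Set X), (∀ U ∈ 𝒰, RegClosed T U) → ⋃₀ 𝒰 = univ →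
    ∃ 𝒱 ⊆ 𝒰, 𝒱.Countable ∧ ⋃₀ 𝒱 = univ

/-- sg-compact: every sg-open cover has a finite subcover. -/
def SgCompact (T : TopologicalSpace X) : Prop :=
  ∀ 𝒰 : Set (Set X), (∀ U ∈ 𝒰, SgOpen T U) → ⋃₀ 𝒰 = univ →
    ∃ 𝒱 ⊆ 𝒰, 𝒱.Finite ∧ ⋃₀ 𝒱 = univ

/-- `A` is S-closed relative to `X`: every cover of `A` by semi-open sets of `X`
has a finite subfamily whose closures cover `A`. -/
def SClosedRel (T : TopologicalSpace X) (A : Set X) : Prop :=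
  letI := T
  ∀ 𝒰 : Set (Set X), (∀ U ∈ 𝒰, SemiOpen T U) → A ⊆ ⋃₀ 𝒰 →
    ∃ 𝒱 ⊆ 𝒰, 𝒱.Finite ∧ A ⊆ ⋃ V ∈ 𝒱, closure V

/-- `A` is s-closed relative to `X`: every cover of `A` by semi-open sets of `X`
has a finite subfamily whose semi-closures cover `A`. -/
def SmallSClosedRel (T : TopologicalSpace X) (A : Set X) : Prop :=
  ∀ 𝒰 : Set (Set X), (∀ U ∈ 𝒰, SemiOpen T U) → A ⊆ ⋃₀ 𝒰 →
    ∃ 𝒱 ⊆ 𝒰, 𝒱.Finite ∧ A ⊆ ⋃ V ∈ 𝒱, sCl T V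

/-- Locally S-closed: every point has a neighbourhood which is S-closed relative to `X`. -/
def LocallySClosed (T : TopologicalSpace X) : Prop :=
  ∀ x : X, ∃ N ∈ @nhds X T x, SClosedRel T N

/-- Locally s-closed: every point has a neighbourhood which is s-closed relative to `X`. -/
def LocallySmallSClosed (T : TopologicalSpace X) : Prop :=
  ∀ x : X, ∃ N ∈ @nhds X T x, SmallSClosedRel T N

/-- para-S-closed: every semi-open cover has a locally finite refinement by
semi-open sets whose union is dense. -/
def ParaSClosed (T : TopologicalSpace X) : Prop :=
  letI := T
  ∀ 𝒰 : Set (Set X), (∀ U ∈ 𝒰, SemiOpen T U) → ⋃₀ 𝒰 = univ →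
    ∃ 𝒱 : Set (Set X), (∀ V ∈ 𝒱, SemiOpen T V) ∧ LocFinite T 𝒱 ∧ Refines 𝒱 𝒰 ∧
      closure (⋃₀ 𝒱) = univ

/-- para-rc-Lindelöf: every regular closed cover has a locally countable
refinement by regular closed sets. -/
def ParaRcLindelof (T : TopologicalSpace X) : Prop :=
  ∀ 𝒰 : Set (Set X), (∀ U ∈ 𝒰, RegClosed T U) → ⋃₀ 𝒰 = univ →
    ∃ 𝒱 : Set (Set X), (∀ V ∈ 𝒱, RegClosed T V) ∧ LocCountable T 𝒱 ∧ Refines 𝒱 𝒰 ∧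
      ⋃₀ 𝒱 = univ

/-- α-subparacompact: every α-open cover has a σ-discrete closed refinement covering `X`. -/
def AlphaSubparacompact (T : TopologicalSpace X) : Prop :=
  ∀ 𝒰 : Set (Set X), (∀ U ∈ 𝒰, AlphaOpen T U) → ⋃₀ 𝒰 = univ →
    ∃ 𝒱 : Set (Set X), (∀ V ∈ 𝒱, @IsClosed X T V) ∧ SigmaDiscrete T 𝒱 ∧ Refines 𝒱 𝒰 ∧
      ⋃₀ 𝒱 = univ

/-- gα-closed: `Cl_α A ⊆ U` whenever `A ⊆ U` with `U` α-open. -/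
def GAlphaClosed (T : TopologicalSpace X) (A : Set X) : Prop :=
  ∀ U : Set X, AlphaOpen T U → A ⊆ U → @closure X (alphaTop T) A ⊆ U

/-- α-paracompact: every α-open cover has a locally finite open refinement. -/
def AlphaParacompact (T : TopologicalSpace X) : Prop :=
  ∀ 𝒰 : Set (Set X), (∀ U ∈ 𝒰, AlphaOpen T U) → ⋃₀ 𝒰 = univ →
    ∃ 𝒱 : Set (Set X), (∀ V ∈ 𝒱, T.IsOpen V) ∧ LocFinite T 𝒱 ∧ Refines 𝒱 𝒰 ∧
      ⋃₀ 𝒱 = univ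

/-! For a closed embedding `i : Y → X`, the set `Set.kernImage i U = i '' U ∪ (range i)ᶜ` is
α-open in `X` whenever `U` is α-open in `Y`: `kernImage i` maps interiors into interiors (as `i`
is closed) and closures into closures (as `i` is continuous and injective). So an α-open cover
of `Y` extends to one of `X`, and pulling a σ-discrete closed refinement of the latter back along
`i` gives one of the former. -/

open Topology Function

theorem sUnion_image_kernImage_eq_univ {i : Y → X} (hinj : Injective i) {𝒰 : Set (Set Y)}
    (hne : 𝒰.Nonempty) (hcov : ⋃₀ 𝒰 = univ) : ⋃₀ (kernImage i '' 𝒰) = univ := by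
  refine eq_univ_of_forall fun x => ?_
  by_cases hx : x ∈ range i
  · obtain ⟨y, rfl⟩ := hx
    obtain ⟨U, hU, hyU⟩ := hcov ▸ mem_univ y
    exact ⟨kernImage i U, mem_image_of_mem _ hU, fun y' hy' => hinj hy' ▸ hyU⟩
  · obtain ⟨U, hU⟩ := hne
    exact ⟨kernImage i U, mem_image_of_mem _ hU, compl_range_subset_kernImage hx⟩

theorem Refines.preimage {i : Y → X} {𝒱 : Set (Set X)} {𝒰 : Set (Set Y)}
    (h : Refines 𝒱 (kernImage i '' 𝒰)) : Refines (preimage i '' 𝒱) 𝒰 := by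
  rintro _ ⟨V, hV, rfl⟩
  obtain ⟨_, ⟨U, hU, rfl⟩, hVU⟩ := h V hV
  exact ⟨U, hU, subset_kernImage_iff.mp hVU⟩

section Topological

variable [tX : TopologicalSpace X] [tY : TopologicalSpace Y] {i : Y → X}

theorem kernImage_closure_subset_closure_kernImage (hc : Continuous i) (hinj : Injective i)
    (s : Set Y) : kernImage i (closure s) ⊆ closure (kernImage i s) := by
  intro x hx
  by_cases hx' : x ∈ range i
  · obtain ⟨y, rfl⟩ := hx'
    have himage : i '' s ⊆ kernImage i s := by
      rintro _ ⟨z, hz, rfl⟩ z' hz'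
      exact hinj hz' ▸ hz
    exact closure_mono himage (image_closure_subset_closure_image hc ⟨y, hx rfl, rfl⟩)
  · exact subset_closure (compl_range_subset_kernImage hx')

theorem Topology.IsClosedEmbedding.alphaOpen_kernImage (hi : IsClosedEmbedding i) {U : Set Y}
    (hU : AlphaOpen tY U) : AlphaOpen tX (kernImage i U) := by
  have hint (s : Set Y) : kernImage i (interior s) ⊆ interior (kernImage i s) :=
    isClosedMap_iff_kernImage_interior.mp hi.isClosedMap
  calc kernImage i U ⊆ kernImage i (interior (closure (interior U))) := kernImage_mono hU
    _ ⊆ interior (kernImage i (closure (interior U))) := hint _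
    _ ⊆ interior (closure (kernImage i (interior U))) :=
      interior_mono (kernImage_closure_subset_closure_kernImage hi.continuous hi.injective _)
    _ ⊆ interior (closure (interior (kernImage i U))) := interior_mono (closure_mono (hint U))

theorem DiscreteFam.preimage (hc : Continuous i) {𝒱 : Set (Set X)} (h : DiscreteFam tX 𝒱) :
    DiscreteFam tY (preimage i '' 𝒱) := by
  intro y
  obtain ⟨N, hN, hsub⟩ := h (i y)
  refine ⟨i ⁻¹' N, hc.continuousAt.preimage_mem_nhds hN, ?_⟩
  rintro _ ⟨⟨V, hV, rfl⟩, z, hzV, hzN⟩ _ ⟨⟨W, hW, rfl⟩, z', hzW, hzN'⟩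
  rw [hsub ⟨hV, i z, hzV, hzN⟩ ⟨hW, i z', hzW, hzN'⟩]

theorem SigmaDiscrete.preimage (hc : Continuous i) {𝒱 : Set (Set X)} (h : SigmaDiscrete tX 𝒱) :
    SigmaDiscrete tY (preimage i '' 𝒱) := by
  obtain ⟨𝒲, rfl, h𝒲⟩ := h
  exact ⟨fun n => Set.preimage i '' 𝒲 n, image_iUnion, fun n => (h𝒲 n).preimage hc⟩

theorem sigmaDiscrete_empty : SigmaDiscrete tX ∅ :=
  ⟨fun _ => ∅, by simp, fun _ _ => ⟨univ, Filter.univ_mem, by simp⟩⟩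

theorem Topology.IsClosedEmbedding.alphaSubparacompact (hi : IsClosedEmbedding i)
    (hX : AlphaSubparacompact tX) : AlphaSubparacompact tY := by
  intro 𝒰 h𝒰 hcov
  obtain rfl | hne := 𝒰.eq_empty_or_nonempty
  · exact ⟨∅, by simp, sigmaDiscrete_empty, by simp [Refines], hcov⟩
  obtain ⟨𝒱, hclosed, hσ, href, hcovX⟩ := hX (kernImage i '' 𝒰)
    (forall_mem_image.2 fun U hU => hi.alphaOpen_kernImage (h𝒰 U hU))
    (sUnion_image_kernImage_eq_univ hi.injective hne hcov)
  refine ⟨preimage i '' 𝒱, forall_mem_image.2 fun V hV => (hclosed V hV).preimage hi.continuous,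
    hσ.preimage hi.continuous, href.preimage, ?_⟩
  rw [sUnion_image, ← preimage_iUnion₂, ← sUnion_eq_biUnion, hcovX, preimage_univ]

end Topological

/-- every closed subspace of an α-subparacompact space is
α-subparacompact. -/
theorem alphaSubparacompact_of_isClosed (T : TopologicalSpace X)
    (hX : AlphaSubparacompact T) (A : Set X) (hA : @IsClosed X T A) :
    AlphaSubparacompact (TopologicalSpace.induced (Subtype.val : A → X) T) :=
  (@IsClosed.isClosedEmbedding_subtypeVal X T A hA).alphaSubparacompact hX
end

section
/- A topological space (X, 𝒯) is α-subparacompact if and only if each α-open cover of X has a σ-closure-preserving closed refinement that covers X. -/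
open Set TopologicalSpace

universe u v

variable {X : Type u} {Y : Type v}

/-!
Discrete families are locally finite, hence closure-preserving; this gives one direction.

For the converse, well-order the α-open cover `(U γ)` and show by induction on `γ` that closed
subsets of `⋃ β < γ, U β` have σ-discrete closed refinements. Tag each member of a
σ-closure-preserving closed refinement by a cell `U γ` or `⋃ β < γ, U β` containing it. Such a
layer `L` is refined again by covering `X` with the cells minus the members of `L` of smaller
tag, which is α-open because closure preservation makes those unions closed; iterating gives a
countably branching tree of layers. For a layer `L` and a child `L'`, the pieces
`(members of L tagged ≤ γ) ∩ (members of L' tagged γ)` form a discrete family in `γ`, and by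
well-foundedness every point lies in some piece. Pieces inside `U γ` are kept, pieces inside
`⋃ β < γ, U β` are refined by the induction hypothesis. The argument only uses that the α-open
sets form a topology finer than `T`.
-/

open Topology

section Families

variable [T : TopologicalSpace X]

theorem DiscreteFam.mono {𝒜 ℬ : Set (Set X)} (h : DiscreteFam T ℬ) (h𝒜 : 𝒜 ⊆ ℬ) :
    DiscreteFam T 𝒜 := fun x =>
  let ⟨N, hN, hsub⟩ := h x
  ⟨N, hN, hsub.anti fun _ hV => ⟨h𝒜 hV.1, hV.2⟩⟩

theorem discreteFam_singleton (A : Set X) : DiscreteFam T {A} :=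
  fun _ => ⟨univ, Filter.univ_mem, subsingleton_singleton.anti (sep_subset _ _)⟩

theorem DiscreteFam.locallyFinite {𝒲 : Set (Set X)} (h : DiscreteFam T 𝒲) :
    LocallyFinite ((↑) : 𝒲 → Set X) := fun x =>
  let ⟨N, hN, hsub⟩ := h x
  ⟨N, hN, (hsub.finite.preimage Subtype.val_injective.injOn).subset fun W hW => ⟨W.2, hW⟩⟩

theorem DiscreteFam.closurePreserving {𝒲 : Set (Set X)} (h : DiscreteFam T 𝒲) :
    ClosurePreserving T 𝒲 := by
  intro 𝒲' h𝒲'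
  rw [sUnion_eq_iUnion, (h.mono h𝒲').locallyFinite.closure_iUnion, biUnion_eq_iUnion]

theorem SigmaDiscrete.sigmaClosurePreserving {𝒱 : Set (Set X)} (h : SigmaDiscrete T 𝒱) :
    SigmaClosurePreserving T 𝒱 :=
  let ⟨𝒲, h𝒱, hdisc⟩ := h
  ⟨𝒲, h𝒱, fun n => (hdisc n).closurePreserving⟩

theorem ClosurePreserving.isClosed_sUnion {𝒲 𝒮 : Set (Set X)} (h : ClosurePreserving T 𝒲)
    (hcl : ∀ W ∈ 𝒲, IsClosed W) (h𝒮 : 𝒮 ⊆ 𝒲) : IsClosed (⋃₀ 𝒮) := by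
  refine isClosed_of_closure_subset ?_
  rw [h 𝒮 h𝒮]
  exact iUnion₂_subset fun W hW =>
    (hcl W (h𝒮 hW)).closure_subset.trans (subset_sUnion_of_mem hW)

theorem DiscreteFam.sigmaDiscrete {𝒱 : Set (Set X)} (h : DiscreteFam T 𝒱) :
    SigmaDiscrete T 𝒱 :=
  ⟨fun _ => 𝒱, (iUnion_const 𝒱).symm, fun _ => h⟩

theorem SigmaDiscrete.iUnion {J : Type*} [Countable J] {F : J → Set (Set X)}
    (h : ∀ j, SigmaDiscrete T (F j)) : SigmaDiscrete T (⋃ j, F j) := by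
  choose 𝒲 h𝒲 hdisc using h
  obtain ⟨g, hg⟩ := exists_surjective_nat (Option (J × ℕ))
  refine ⟨fun n => (g n).elim ∅ fun p => 𝒲 p.1 p.2, ?_, fun n => ?_⟩
  · rw [hg.iUnion_comp fun o => o.elim ∅ fun p => 𝒲 p.1 p.2, iUnion_option, iUnion_prod']
    simp only [Option.elim_none, Option.elim_some, empty_union, h𝒲]
  · dsimp only
    rcases g n with _ | ⟨j, m⟩
    · exact (discreteFam_singleton ∅).mono (empty_subset _)
    · exact hdisc j m

def IsDiscreteFamily {κ : Type*} (f : κ → Set X) : Prop :=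
  ∀ x, ∃ N ∈ 𝓝 x, {i | (f i ∩ N).Nonempty}.Subsingleton

theorem IsDiscreteFamily.discreteFam_iUnion_image_inter {κ : Type*} {f : κ → Set X}
    (hf : IsDiscreteFamily f) {𝒬 : κ → Set (Set X)} (h𝒬 : ∀ i, DiscreteFam T (𝒬 i)) :
    DiscreteFam T (⋃ i, (· ∩ f i) '' 𝒬 i) := by
  intro x
  obtain ⟨N, hN, hsub⟩ := hf x
  by_cases hmeet : ∃ i, (f i ∩ N).Nonempty
  · obtain ⟨i, hi⟩ := hmeet
    obtain ⟨M, hM, hsubM⟩ := h𝒬 i x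
    have hmember : ∀ S ∈ ⋃ j, (· ∩ f j) '' 𝒬 j, (S ∩ (N ∩ M)).Nonempty →
        ∃ Q, (Q ∈ 𝒬 i ∧ (Q ∩ M).Nonempty) ∧ S = Q ∩ f i := by
      intro S hS ⟨y, hyS, hyN, hyM⟩
      obtain ⟨j, Q, hQ, rfl⟩ := by simpa only [mem_iUnion, mem_image] using hS
      obtain rfl : j = i := hsub ⟨y, hyS.2, hyN⟩ hi
      exact ⟨Q, ⟨hQ, y, hyS.1, hyM⟩, rfl⟩
    refine ⟨N ∩ M, Filter.inter_mem hN hM, fun S₁ h₁ S₂ h₂ => ?_⟩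
    obtain ⟨Q₁, hQ₁, rfl⟩ := hmember S₁ h₁.1 h₁.2
    obtain ⟨Q₂, hQ₂, rfl⟩ := hmember S₂ h₂.1 h₂.2
    rw [hsubM hQ₁ hQ₂]
  · refine ⟨N, hN, fun S hS => ?_⟩
    obtain ⟨j, Q, -, rfl⟩ := by simpa only [mem_iUnion, mem_image] using hS.1
    exact absurd ⟨j, hS.2.mono (inter_subset_inter_left _ inter_subset_right)⟩ hmeet

end Families

section Covers

variable [T : TopologicalSpace X] {ι : Type*}

def HasSigmaDiscreteClosedCover (U : ι → Set X) (D : Set X) : Prop :=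
  ∃ 𝒱 : Set (Set X), (∀ V ∈ 𝒱, IsClosed V) ∧ SigmaDiscrete T 𝒱 ∧ (∀ V ∈ 𝒱, ∃ i, V ⊆ U i) ∧
    D ⊆ ⋃₀ 𝒱

namespace HasSigmaDiscreteClosedCover

variable {U : ι → Set X} {D : Set X}

theorem of_isClosed_subset (hD : IsClosed D) {i : ι} (hDU : D ⊆ U i) :
    HasSigmaDiscreteClosedCover U D :=
  ⟨{D}, by simpa using hD, (discreteFam_singleton D).sigmaDiscrete, by simpa using ⟨i, hDU⟩,
    by simp⟩

theorem mono (h : HasSigmaDiscreteClosedCover U D) {D' : Set X} (hD' : D' ⊆ D) :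
    HasSigmaDiscreteClosedCover U D' :=
  let ⟨𝒱, hcl, hσ, href, hcov⟩ := h
  ⟨𝒱, hcl, hσ, href, hD'.trans hcov⟩

theorem mono_family (h : HasSigmaDiscreteClosedCover U D) {κ : Type*} {U' : κ → Set X}
    (hU : ∀ i, ∃ j, U i ⊆ U' j) : HasSigmaDiscreteClosedCover U' D :=
  let ⟨𝒱, hcl, hσ, href, hcov⟩ := h
  ⟨𝒱, hcl, hσ, fun V hV =>
    let ⟨i, hi⟩ := href V hV
    let ⟨j, hj⟩ := hU i
    ⟨j, hi.trans hj⟩, hcov⟩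

theorem iUnion {J : Type*} [Countable J] {D : J → Set X}
    (h : ∀ j, HasSigmaDiscreteClosedCover U (D j)) :
    HasSigmaDiscreteClosedCover U (⋃ j, D j) := by
  choose 𝒱 hcl hσ href hcov using h
  refine ⟨⋃ j, 𝒱 j, ?_, SigmaDiscrete.iUnion hσ, ?_, ?_⟩
  · simp only [mem_iUnion, forall_exists_index]
    exact fun V j => hcl j V
  · simp only [mem_iUnion, forall_exists_index]
    exact fun V j => href j V
  · exact iUnion_subset fun j => (hcov j).trans (sUnion_mono (subset_iUnion 𝒱 j))

/-- Intersect the `n`-th discrete subfamily of each cover with its set. -/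
theorem iUnion_of_isDiscreteFamily {κ : Type*} {P : κ → Set X} (hP : IsDiscreteFamily P)
    (hcl : ∀ i, IsClosed (P i)) (h : ∀ i, HasSigmaDiscreteClosedCover U (P i)) :
    HasSigmaDiscreteClosedCover U (⋃ i, P i) := by
  choose 𝒱 hcl𝒱 hσ href hcov using h
  choose 𝒲 h𝒲 hdisc using hσ
  refine ⟨⋃ n, ⋃ i, (· ∩ P i) '' 𝒲 i n, ?_,
    ⟨_, rfl, fun n => hP.discreteFam_iUnion_image_inter fun i => hdisc i n⟩, ?_, ?_⟩
  · simp only [mem_iUnion, mem_image]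
    rintro _ ⟨n, i, Q, hQ, rfl⟩
    exact (hcl𝒱 i Q (h𝒲 i ▸ mem_iUnion_of_mem n hQ)).inter (hcl i)
  · simp only [mem_iUnion, mem_image]
    rintro _ ⟨n, i, Q, hQ, rfl⟩
    obtain ⟨j, hj⟩ := href i Q (h𝒲 i ▸ mem_iUnion_of_mem n hQ)
    exact ⟨j, inter_subset_left.trans hj⟩
  · refine iUnion_subset fun i x hx => ?_
    obtain ⟨Q, hQ, hxQ⟩ := hcov i hx
    obtain ⟨n, hQn⟩ := mem_iUnion.1 (h𝒲 i ▸ hQ)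
    exact ⟨Q ∩ P i, mem_iUnion_of_mem n (mem_iUnion_of_mem i ⟨Q, hQn, rfl⟩), hxQ, hx⟩

end HasSigmaDiscreteClosedCover

end Covers

section Cells

variable {ι : Type*} [LinearOrder ι]

def cell (U : ι → Set X) : ι × Bool → Set X
  | (γ, true) => U γ
  | (γ, false) => ⋃ β < γ, U β

theorem isOpen_cell {S : TopologicalSpace X} {U : ι → Set X} (hU : ∀ i, IsOpen[S] (U i))
    (p : ι × Bool) : IsOpen[S] (cell U p) := by
  rcases p with ⟨γ, _ | _⟩
  exacts [isOpen_iUnion fun β => isOpen_iUnion fun _ => hU β, hU γ]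

end Cells

section Layers

variable [T : TopologicalSpace X] {ι : Type*} [LinearOrder ι]

structure Layer (U : ι → Set X) where
  mem : Set (Set X × (ι × Bool))
  isClosed_biUnion : ∀ s, IsClosed (⋃ q ∈ mem ∩ s, q.1)
  subset_cell : ∀ q ∈ mem, q.1 ⊆ cell U q.2

namespace Layer

variable {U : ι → Set X} (L : Layer U)

def unionOf (s : Set (Set X × (ι × Bool))) : Set X := ⋃ q ∈ L.mem ∩ s, q.1

def carrier : Set X := L.unionOf univ

def lower (γ : ι) : Set X := L.unionOf {q | q.2.1 < γ}

def upTo (γ : ι) : Set X := L.unionOf {q | q.2.1 ≤ γ}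

theorem mem_unionOf {s : Set (Set X × (ι × Bool))} {x : X} :
    x ∈ L.unionOf s ↔ ∃ q ∈ L.mem, q ∈ s ∧ x ∈ q.1 := by
  simp [unionOf, and_assoc]

theorem isClosed_unionOf (s : Set (Set X × (ι × Bool))) : IsClosed (L.unionOf s) :=
  L.isClosed_biUnion s

theorem upTo_mono {β γ : ι} (h : β ≤ γ) : L.upTo β ⊆ L.upTo γ :=
  biUnion_mono (inter_subset_inter_right _ fun _ hq => le_trans hq h) fun _ _ => subset_rfl

theorem upTo_subset_carrier (γ : ι) : L.upTo γ ⊆ L.carrier :=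
  biUnion_mono (inter_subset_inter_right _ (subset_univ _)) fun _ _ => subset_rfl

theorem le_of_mem_upTo_of_notMem_lower {x : X} {β γ : ι} (hγ : x ∈ L.upTo γ)
    (hβ : x ∉ L.lower β) : β ≤ γ := by
  obtain ⟨q, hq, hqγ, hxq⟩ := L.mem_unionOf.1 hγ
  exact not_lt.1 fun hγβ => hβ (L.mem_unionOf.2 ⟨q, hq, lt_of_le_of_lt hqγ hγβ, hxq⟩)

theorem setOf_forall_mem_imp_mem_nhds (x : X) :
    {y | ∀ q ∈ L.mem, y ∈ q.1 → x ∈ q.1} ∈ 𝓝 x := by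
  refine Filter.mem_of_superset
    ((L.isClosed_unionOf {q | x ∉ q.1}).isOpen_compl.mem_nhds ?_) ?_
  · rw [mem_compl_iff, mem_unionOf]
    rintro ⟨q, -, hxq, hxq'⟩
    exact hxq hxq'
  · intro y hy q hq hyq
    by_contra hxq
    exact hy (L.mem_unionOf.2 ⟨q, hq, hxq, hyq⟩)

theorem exists_mem_cell_diff_lower [WellFoundedLT ι] {x : X} (hx : x ∈ L.carrier) :
    ∃ p, x ∈ cell U p \ L.lower p.1 := by
  obtain ⟨q₀, hq₀, -, hxq₀⟩ := L.mem_unionOf.1 hx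
  obtain ⟨q, ⟨hq, hxq⟩, hmin⟩ := (InvImage.wf (fun q : Set X × (ι × Bool) => q.2.1)
    wellFounded_lt).has_min {q ∈ L.mem | x ∈ q.1} ⟨q₀, hq₀, hxq₀⟩
  refine ⟨q.2, L.subset_cell q hq hxq, fun hlow => ?_⟩
  obtain ⟨q', hq', hlt, hxq'⟩ := L.mem_unionOf.1 hlow
  exact hmin q' ⟨hq', hxq'⟩ hlt

def empty : Layer U where
  mem := ∅
  isClosed_biUnion _ := by simp
  subset_cell _ := False.elim

theorem lower_empty (γ : ι) : (empty : Layer U).lower γ = ∅ := by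
  simp [lower, unionOf, empty]

def IsChild (L L' : Layer U) : Prop :=
  ∀ q ∈ L'.mem, Disjoint q.1 (L.lower q.2.1)

def piece (L L' : Layer U) (p : ι × Bool) : Set X :=
  L.upTo p.1 ∩ L'.unionOf {q | q.2 = p}

theorem isClosed_piece (L L' : Layer U) (p : ι × Bool) : IsClosed (piece L L' p) :=
  (L.isClosed_unionOf _).inter (L'.isClosed_unionOf _)

theorem piece_subset_cell (L L' : Layer U) (p : ι × Bool) : piece L L' p ⊆ cell U p := by
  rintro x ⟨-, hx⟩
  obtain ⟨q, hq, rfl, hxq⟩ := L'.mem_unionOf.1 hx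
  exact L'.subset_cell q hq hxq

/-- A point of `piece L L' (γ, b)` close to `x` forces `γ` to be the least tag of a member of
`L` containing `x`. -/
theorem IsChild.isDiscreteFamily_piece {L L' : Layer U} (h : IsChild L L') (b : Bool) :
    IsDiscreteFamily fun γ => piece L L' (γ, b) := by
  intro x
  set N := {y | ∀ q ∈ L.mem, y ∈ q.1 → x ∈ q.1} ∩ {y | ∀ q ∈ L'.mem, y ∈ q.1 → x ∈ q.1}
  refine ⟨N, Filter.inter_mem (L.setOf_forall_mem_imp_mem_nhds x)
    (L'.setOf_forall_mem_imp_mem_nhds x), ?_⟩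
  have key : ∀ γ, (piece L L' (γ, b) ∩ N).Nonempty → x ∈ L.upTo γ ∧ x ∉ L.lower γ := by
    rintro γ ⟨y, ⟨hyL, hyL'⟩, hxL, hxL'⟩
    obtain ⟨q, hq, hqγ, hyq⟩ := L.mem_unionOf.1 hyL
    obtain ⟨q', hq', hq'γ, hyq'⟩ := L'.mem_unionOf.1 hyL'
    refine ⟨L.mem_unionOf.2 ⟨q, hq, hqγ, hxL q hq hyq⟩, fun hlow => ?_⟩
    have htag : q'.2.1 = γ := congrArg Prod.fst hq'γ
    exact disjoint_left.1 (h q' hq') (hxL' q' hq' hyq') (htag ▸ hlow)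
  intro γ₁ h₁ γ₂ h₂
  obtain ⟨hup₁, hlow₁⟩ := key γ₁ h₁
  obtain ⟨hup₂, hlow₂⟩ := key γ₂ h₂
  exact le_antisymm (L.le_of_mem_upTo_of_notMem_lower hup₂ hlow₁)
    (L.le_of_mem_upTo_of_notMem_lower hup₁ hlow₂)

/-- `along ch L [k₁, …, kₙ] = ch (⋯ (ch L kₙ) ⋯) k₁`. -/
def along (ch : Layer U → ℕ → Layer U) (L : Layer U) (t : List ℕ) : Layer U :=
  t.foldr (fun k L => ch L k) L

/-- Following a child member through `x` either lands `x` in a piece or strictly lowers the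
least tag `γ` with `x ∈ upTo γ`, which can happen only finitely often. -/
theorem exists_mem_piece [WellFoundedLT ι] (ch : Layer U → ℕ → Layer U)
    (hch : ∀ L, L.carrier ⊆ ⋃ k, (ch L k).carrier) {L : Layer U} {x : X} (hx : x ∈ L.carrier) :
    ∃ t k p, x ∈ piece (along ch L t) (ch (along ch L t) k) p := by
  suffices h : ∀ γ (L : Layer U), x ∈ L.upTo γ →
      ∃ t k p, x ∈ piece (along ch L t) (ch (along ch L t) k) p by
    obtain ⟨q, hq, -, hxq⟩ := L.mem_unionOf.1 hx
    exact h q.2.1 L (L.mem_unionOf.2 ⟨q, hq, le_rfl, hxq⟩)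
  intro γ
  induction γ using WellFoundedLT.induction with
  | _ γ ih =>
  intro L hup
  obtain ⟨k, hk⟩ := mem_iUnion.1 (hch L (L.upTo_subset_carrier γ hup))
  obtain ⟨q, hq, -, hxq⟩ := (ch L k).mem_unionOf.1 hk
  by_cases hq_up : x ∈ L.upTo q.2.1
  · exact ⟨[], k, q.2, hq_up, (ch L k).mem_unionOf.2 ⟨q, hq, rfl, hxq⟩⟩
  · have hlt : q.2.1 < γ := lt_of_not_ge fun h => hq_up (L.upTo_mono h hup)
    obtain ⟨t, k', p, hp⟩ := ih q.2.1 hlt (ch L k) ((ch L k).mem_unionOf.2 ⟨q, hq, le_rfl, hxq⟩)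
    exact ⟨t ++ [k], k', p, by simpa [along, List.foldr_append] using hp⟩

end Layer

end Layers

section Refinement

variable {S : TopologicalSpace X} [T : TopologicalSpace X]

variable (S) in
def SigmaClosurePreservingRefinable : Prop :=
  ∀ 𝒰 : Set (Set X), (∀ U ∈ 𝒰, IsOpen[S] U) → ⋃₀ 𝒰 = univ →
    ∃ 𝒱 : Set (Set X), (∀ V ∈ 𝒱, IsClosed V) ∧ SigmaClosurePreserving T 𝒱 ∧ Refines 𝒱 𝒰 ∧
      ⋃₀ 𝒱 = univ

section WellOrdered

variable {ι : Type*} [LinearOrder ι]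

open Layer

theorem Layer.exists_seq_isChild_covering (hS : S ≤ T) (hσ : SigmaClosurePreservingRefinable S)
    {U : ι → Set X} (hU : ∀ i, IsOpen[S] (U i)) (L : Layer U) {D : Set X} (hD : IsClosed D)
    (hDcell : ∀ x ∈ D, ∃ p, x ∈ cell U p \ L.lower p.1) :
    ∃ c : ℕ → Layer U, (∀ k, IsChild L (c k)) ∧ D ⊆ ⋃ k, (c k).carrier := by
  set 𝒞 := insert Dᶜ (range fun p => cell U p \ L.lower p.1)
  have hopen : ∀ A ∈ 𝒞, IsOpen[S] A := by
    rintro _ (rfl | ⟨p, rfl⟩)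
    · exact IsOpen.mono (t₂ := T) hD.isOpen_compl hS
    · exact @IsOpen.inter X S _ _ (isOpen_cell hU p)
        (IsOpen.mono (t₂ := T) (L.isClosed_unionOf _).isOpen_compl hS)
  have hcover : ⋃₀ 𝒞 = univ := by
    refine eq_univ_of_forall fun x => ?_
    by_cases hx : x ∈ D
    · obtain ⟨p, hp⟩ := hDcell x hx
      exact ⟨_, mem_insert_of_mem _ ⟨p, rfl⟩, hp⟩
    · exact ⟨Dᶜ, mem_insert _ _, hx⟩
  obtain ⟨𝒱, hcl, ⟨𝒲, rfl, hcp⟩, href, hcov⟩ := hσ 𝒞 hopen hcover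
  refine ⟨fun n => ⟨{q | q.1 ∈ 𝒲 n ∧ q.1 ⊆ cell U q.2 \ L.lower q.2.1}, fun s => ?_,
    fun q hq => hq.2.trans sdiff_subset⟩, fun n q hq => (subset_sdiff.1 hq.2).2, fun x hx => ?_⟩
  · rw [← sUnion_image]
    exact (hcp n).isClosed_sUnion (fun W hW => hcl W (mem_iUnion_of_mem n hW))
      (image_subset_iff.2 fun q hq => hq.1.1)
  · have hxG : x ∈ ⋃₀ ⋃ n, 𝒲 n := hcov ▸ mem_univ x
    obtain ⟨G, hG, hxG⟩ := hxG
    obtain ⟨n, hGn⟩ := mem_iUnion.1 hG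
    obtain ⟨A, hA, hGA⟩ := href G hG
    rcases hA with rfl | ⟨p, rfl⟩
    · exact absurd hx (hGA hxG)
    · exact mem_iUnion.2 ⟨n, (mem_unionOf _).2 ⟨(G, p), ⟨hGn, hGA⟩, trivial, hxG⟩⟩

variable [WellFoundedLT ι]

theorem hasSigmaDiscreteClosedCover_of_below (hS : S ≤ T)
    (hσ : SigmaClosurePreservingRefinable S) {U : ι → Set X} (hU : ∀ i, IsOpen[S] (U i))
    (hbelow : ∀ γ D, IsClosed D → D ⊆ ⋃ β < γ, U β → HasSigmaDiscreteClosedCover U D)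
    {C : Set X} (hC : IsClosed C) (hCU : C ⊆ ⋃ i, U i) : HasSigmaDiscreteClosedCover U C := by
  choose ch hch hcov using fun L : Layer U => exists_seq_isChild_covering hS hσ hU L
    (L.isClosed_unionOf univ) fun _ => L.exists_mem_cell_diff_lower
  obtain ⟨root, -, hroot⟩ := exists_seq_isChild_covering hS hσ hU empty hC fun x hx => by
    obtain ⟨i, hi⟩ := mem_iUnion.1 (hCU hx)
    exact ⟨(i, true), hi, by simp [lower_empty]⟩
  have hpiece : ∀ L L' : Layer U, ∀ p, HasSigmaDiscreteClosedCover U (piece L L' p) := by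
    rintro L L' ⟨γ, _ | _⟩
    · exact hbelow γ _ (isClosed_piece L L' _) (piece_subset_cell L L' _)
    · exact .of_isClosed_subset (isClosed_piece L L' _) (piece_subset_cell L L' (γ, true))
  set P : ℕ × List ℕ × ℕ × Bool → ι → Set X := fun j γ =>
    piece (along ch (root j.1) j.2.1) (ch (along ch (root j.1) j.2.1) j.2.2.1) (γ, j.2.2.2)
  have hP : HasSigmaDiscreteClosedCover U (⋃ j, ⋃ γ, P j γ) :=
    .iUnion fun j => .iUnion_of_isDiscreteFamily ((hch _ _).isDiscreteFamily_piece _)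
      (fun _ => isClosed_piece _ _ _) fun _ => hpiece _ _ _
  refine hP.mono fun x hx => ?_
  obtain ⟨k₀, hk₀⟩ := mem_iUnion.1 (hroot hx)
  obtain ⟨t, k, ⟨γ, b⟩, hxp⟩ := exists_mem_piece ch hcov hk₀
  exact mem_iUnion.2 ⟨(k₀, t, k, b), mem_iUnion.2 ⟨γ, hxp⟩⟩

theorem hasSigmaDiscreteClosedCover_of_subset_iUnion (hS : S ≤ T)
    (hσ : SigmaClosurePreservingRefinable S) {U : ι → Set X} (hU : ∀ i, IsOpen[S] (U i))
    {C : Set X} (hC : IsClosed C) (hCU : C ⊆ ⋃ i, U i) : HasSigmaDiscreteClosedCover U C := by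
  have hbelow : ∀ γ D, IsClosed D → D ⊆ ⋃ β < γ, U β →
      HasSigmaDiscreteClosedCover (fun β : Iio γ => U β) D := by
    intro γ
    induction γ using WellFoundedLT.induction with
    | _ γ ih =>
    intro D hD hDγ
    refine hasSigmaDiscreteClosedCover_of_below hS hσ (U := fun β : Iio γ => U β)
      (fun β => hU β) (fun δ D' hD' hD'δ => ?_) hD ?_
    · refine (ih δ δ.2 D' hD' ?_).mono_family fun β => ⟨⟨β, β.2.trans δ.2⟩, subset_rfl⟩
      exact hD'δ.trans (iUnion₂_subset fun β hβ => subset_biUnion_of_mem (u := U) hβ)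
    · simpa [iUnion_subtype] using hDγ
  exact hasSigmaDiscreteClosedCover_of_below hS hσ hU
    (fun γ D hD hDγ => (hbelow γ D hD hDγ).mono_family fun β => ⟨β, subset_rfl⟩) hC hCU

end WellOrdered

theorem SigmaClosurePreservingRefinable.exists_sigmaDiscrete_refinement (hS : S ≤ T)
    (hσ : SigmaClosurePreservingRefinable S) {𝒰 : Set (Set X)} (hU : ∀ U ∈ 𝒰, IsOpen[S] U)
    (hcov : ⋃₀ 𝒰 = univ) :
    ∃ 𝒱 : Set (Set X), (∀ V ∈ 𝒱, IsClosed V) ∧ SigmaDiscrete T 𝒱 ∧ Refines 𝒱 𝒰 ∧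
      ⋃₀ 𝒱 = univ := by
  obtain ⟨_, _⟩ := exists_wellFoundedLT (α := 𝒰)
  obtain ⟨𝒱, hcl, hσd, href, hC⟩ := hasSigmaDiscreteClosedCover_of_subset_iUnion hS hσ
    (U := ((↑) : 𝒰 → Set X)) (fun U => hU U U.2) isClosed_univ
    (by rw [← sUnion_eq_iUnion, hcov])
  exact ⟨𝒱, hcl, hσd, fun V hV => let ⟨U, hVU⟩ := href V hV; ⟨U, U.2, hVU⟩,
    univ_subset_iff.1 hC⟩

end Refinement

theorem alphaTop_le [T : TopologicalSpace X] : alphaTop T ≤ T :=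
  TopologicalSpace.le_def.2 fun A (hA : IsOpen A) =>
    show A ⊆ interior (closure (interior A)) by
      rw [hA.interior_eq]
      exact hA.subset_interior_closure

/-- `X` is α-subparacompact iff every α-open cover has a
σ-closure-preserving closed refinement covering `X`. -/
theorem alphaSubparacompact_iff_sigmaClosurePreserving (T : TopologicalSpace X) :
    AlphaSubparacompact T ↔
      ∀ 𝒰 : Set (Set X), (∀ U ∈ 𝒰, AlphaOpen T U) → ⋃₀ 𝒰 = univ →
        ∃ 𝒱 : Set (Set X), (∀ V ∈ 𝒱, @IsClosed X T V) ∧ SigmaClosurePreserving T 𝒱 ∧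
          Refines 𝒱 𝒰 ∧ ⋃₀ 𝒱 = univ := by
  refine ⟨fun h 𝒰 hU hcov => ?_, fun h 𝒰 hU hcov => ?_⟩
  · obtain ⟨𝒱, hcl, hσ, href, hcov𝒱⟩ := h 𝒰 hU hcov
    exact ⟨𝒱, hcl, hσ.sigmaClosurePreserving, href, hcov𝒱⟩
  · exact SigmaClosurePreservingRefinable.exists_sigmaDiscrete_refinement alphaTop_le h hU hcov
end
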